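/- (Truncated Gumbel categorical sampling, closed form) Let $0<\pi_1\le\dots\le\pi_K$ with $\sum_k\pi_k=1$, set $\pi_0=0$ (with the convention $e^{(K+1-i-\sum_{k\ge i}\pi_k/\pi_0)e^{-M}}=0$), and let $g_1,\dots,g_K$ be i.i.d. samples from the standard Gumbel distribution conditioned on $g\le M$. Then for each $1\le n\le K$, $P\big(\operatorname*{argmax}_i(\log\pi_i+g_i)=n\big)=\pi_n\sum_{i=1}^n\beta(i)$ where $\beta(i)=\frac{e^{(K+1-i-\frac{\sum_{k=i}^K\pi_k}{\pi_i})e^{-M}}-e^{(K+1-i-\frac{\sum_{k=i}^K\pi_k}{\pi_{i-1}})e^{-M}}}{\sum_{k=i}^K\pi_k}$. -/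

import Mathlib

/-!
Condition on the noise `x = g n` of class `n`: by independence the probability is
`∫ f(x) ∏_{i ≠ n} F(x + log pₙ - log pᵢ) dx`, with `f`, `F` the truncated Gumbel density and CDF.
The `i`-th factor is `1` for `x ≥ tᵢ := M + log pᵢ - log pₙ`, and the breakpoints
`t₁ ≤ ⋯ ≤ tₙ = M` cut `(-∞, M]` into pieces on which the integrand is
`e^{(K+1-j)e^{-M}} e^{-x} exp(-e^{-x} ∑_{k ≥ j} pₖ / pₙ)`. This has the explicit antiderivative
`e^{(K+1-j)e^{-M}} exp(-e^{-x} ∑_{k ≥ j} pₖ / pₙ) / (∑_{k ≥ j} pₖ / pₙ)`, and the piece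
`(tⱼ₋₁, tⱼ]` contributes `pₙ β(j)`.
-/

open MeasureTheory ProbabilityTheory Real Set Filter Topology

theorem integrableOn_Iic_deriv_of_nonneg {f f' : ℝ → ℝ} {a m : ℝ}
    (hderiv : ∀ x ∈ Iic a, HasDerivAt f (f' x) x) (hf' : ∀ x ∈ Iic a, 0 ≤ f' x)
    (hf : Tendsto f atBot (𝓝 m)) : IntegrableOn f' (Iic a) := by
  have hIoc : ∀ x ≤ a, IntegrableOn f' (Ioc x a) := fun x hx =>
    intervalIntegral.integrableOn_deriv_of_nonneg
      (fun y hy => (hderiv y hy.2).continuousAt.continuousWithinAt)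
      (fun y hy => hderiv y hy.2.le) (fun y hy => hf' y hy.2.le)
  refine integrableOn_Iic_of_intervalIntegral_norm_tendsto (f a - m) a (fun x => ?_) tendsto_id
    ((hf.const_sub (f a)).congr' ?_)
  · rcases le_or_gt x a with hx | hx
    · exact hIoc x hx
    · simp [Ioc_eq_empty_of_le hx.le]
  · filter_upwards [Iic_mem_atBot a] with x (hx : x ≤ a)
    rw [id, intervalIntegral.integral_of_le hx,
      setIntegral_congr_fun measurableSet_Ioc fun y hy => norm_of_nonneg (hf' y hy.2),
      ← intervalIntegral.integral_of_le hx,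
      intervalIntegral.integral_eq_sub_of_hasDerivAt_of_le hx
        (fun y hy => (hderiv y hy.2).continuousAt.continuousWithinAt)
        (fun y hy => hderiv y hy.2.le)
        ((intervalIntegrable_iff_integrableOn_Ioc_of_le hx).2 (hIoc x hx))]

theorem hasDerivAt_exp_neg_mul_exp_neg_div {a : ℝ} (ha : a ≠ 0) (x : ℝ) :
    HasDerivAt (fun x => exp (-(a * exp (-x))) / a) (exp (-x) * exp (-(a * exp (-x)))) x := by
  refine (((((hasDerivAt_neg x).exp).const_mul a).neg.exp).div_const a).congr_deriv ?_
  field_simp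
  rfl

theorem tendsto_exp_neg_mul_exp_neg_atBot {a : ℝ} (ha : 0 < a) :
    Tendsto (fun x => exp (-(a * exp (-x)))) atBot (𝓝 0) :=
  tendsto_exp_atBot.comp <| tendsto_neg_atTop_atBot.comp <|
    (tendsto_exp_atTop.comp tendsto_neg_atBot_atTop).const_mul_atTop ha

theorem integrableOn_Iic_exp_neg_mul_exp_neg_mul_exp_neg {a : ℝ} (ha : 0 < a) (b : ℝ) :
    IntegrableOn (fun x => exp (-x) * exp (-(a * exp (-x)))) (Iic b) :=
  integrableOn_Iic_deriv_of_nonneg (fun x _ => hasDerivAt_exp_neg_mul_exp_neg_div ha.ne' x)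
    (fun x _ => by positivity) ((tendsto_exp_neg_mul_exp_neg_atBot ha).div_const a)

theorem integral_Iic_exp_neg_mul_exp_neg_mul_exp_neg {a : ℝ} (ha : 0 < a) (b : ℝ) :
    ∫ x in Iic b, exp (-x) * exp (-(a * exp (-x))) = exp (-(a * exp (-b))) / a := by
  rw [integral_Iic_of_hasDerivAt_of_tendsto'
    (fun x _ => hasDerivAt_exp_neg_mul_exp_neg_div ha.ne' x)
    (integrableOn_Iic_exp_neg_mul_exp_neg_mul_exp_neg ha b)
    (by simpa using (tendsto_exp_neg_mul_exp_neg_atBot ha).div_const a), sub_zero]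

theorem integral_exp_neg_mul_exp_neg_mul_exp_neg {a : ℝ} (ha : a ≠ 0) (x₁ x₂ : ℝ) :
    ∫ x in x₁..x₂, exp (-x) * exp (-(a * exp (-x))) =
      exp (-(a * exp (-x₂))) / a - exp (-(a * exp (-x₁))) / a :=
  intervalIntegral.integral_eq_sub_of_hasDerivAt
    (fun x _ => hasDerivAt_exp_neg_mul_exp_neg_div ha x)
    (by apply Continuous.intervalIntegrable; fun_prop)

noncomputable def truncGumbelCDF (M x : ℝ) : ℝ := min (exp (-exp (-x)) / exp (-exp (-M))) 1

noncomputable def truncGumbelPDF (M : ℝ) : ℝ → ℝ :=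
  (Iic M).indicator fun x => exp (exp (-M)) * (exp (-x) * exp (-exp (-x)))

section TruncGumbel

variable {M : ℝ}

theorem truncGumbelCDF_eq (M x : ℝ) :
    truncGumbelCDF M x = exp (exp (-M) - exp (-min x M)) := by
  have hmono : Monotone fun y : ℝ => exp (-exp (-y)) := fun _ _ h =>
    exp_le_exp.2 (neg_le_neg (exp_le_exp.2 (neg_le_neg h)))
  rw [truncGumbelCDF, ← div_self (exp_pos (-exp (-M))).ne', min_div_div_right (exp_pos _).le,
    ← hmono.map_min, ← exp_sub, neg_sub_neg]

theorem truncGumbelCDF_of_le {x : ℝ} (hx : x ≤ M) :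
    truncGumbelCDF M x = exp (exp (-M) - exp (-x)) := by
  rw [truncGumbelCDF_eq, min_eq_left hx]

theorem truncGumbelCDF_of_ge {x : ℝ} (hx : M ≤ x) : truncGumbelCDF M x = 1 := by
  rw [truncGumbelCDF_eq, min_eq_right hx, sub_self, exp_zero]

theorem truncGumbelCDF_nonneg (M x : ℝ) : 0 ≤ truncGumbelCDF M x := by
  rw [truncGumbelCDF_eq]; positivity

theorem truncGumbelCDF_le_one (M x : ℝ) : truncGumbelCDF M x ≤ 1 := min_le_right _ _

@[fun_prop]
theorem continuous_truncGumbelCDF (M : ℝ) : Continuous (truncGumbelCDF M) := by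
  unfold truncGumbelCDF; fun_prop

theorem truncGumbelPDF_nonneg (M x : ℝ) : 0 ≤ truncGumbelPDF M x :=
  indicator_nonneg (fun _ _ => by positivity) x

theorem measurable_truncGumbelPDF (M : ℝ) : Measurable (truncGumbelPDF M) :=
  Measurable.indicator (by fun_prop) measurableSet_Iic

theorem integrable_truncGumbelPDF (M : ℝ) : Integrable (truncGumbelPDF M) := by
  have := integrableOn_Iic_exp_neg_mul_exp_neg_mul_exp_neg one_pos M
  simp only [one_mul] at this
  exact IntegrableOn.integrable_indicator (this.const_mul _) measurableSet_Iic

theorem integrable_truncGumbelPDF_mul_prod {ι : Type*} (M : ℝ) (T : Finset ι) (c : ι → ℝ) :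
    Integrable fun x => truncGumbelPDF M x * ∏ i ∈ T, truncGumbelCDF M (x + c i) := by
  refine (integrable_truncGumbelPDF M).mul_bdd (c := 1) ?_ (ae_of_all _ fun x => ?_)
  · exact Measurable.aestronglyMeasurable (by fun_prop)
  · rw [norm_of_nonneg (Finset.prod_nonneg fun _ _ => truncGumbelCDF_nonneg M _)]
    exact Finset.prod_le_one (fun _ _ => truncGumbelCDF_nonneg M _)
      fun _ _ => truncGumbelCDF_le_one M _

theorem lintegral_Iic_truncGumbelPDF (M x : ℝ) :
    ∫⁻ t in Iic x, ENNReal.ofReal (truncGumbelPDF M t) = ENNReal.ofReal (truncGumbelCDF M x) := by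
  rw [← ofReal_integral_eq_lintegral_ofReal (integrable_truncGumbelPDF M).integrableOn
      (ae_of_all _ (truncGumbelPDF_nonneg M)),
    truncGumbelPDF, setIntegral_indicator measurableSet_Iic, Iic_inter_Iic, integral_const_mul]
  have := integral_Iic_exp_neg_mul_exp_neg_mul_exp_neg one_pos (min x M)
  simp only [one_mul, div_one] at this
  rw [this, truncGumbelCDF_eq, exp_sub, div_eq_mul_inv, ← exp_neg]

theorem map_eq_withDensity_truncGumbelPDF {Ω : Type*} [MeasurableSpace Ω] {μ : Measure Ω}
    [IsProbabilityMeasure μ] {X : Ω → ℝ} (hX : Measurable X)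
    (hcdf : ∀ x, μ {ω | X ω ≤ x} = ENNReal.ofReal (truncGumbelCDF M x)) :
    μ.map X = volume.withDensity fun t => ENNReal.ofReal (truncGumbelPDF M t) := by
  have : IsProbabilityMeasure (μ.map X) := Measure.isProbabilityMeasure_map hX.aemeasurable
  refine Measure.ext_of_Iic _ _ fun x => ?_
  rw [Measure.map_apply hX measurableSet_Iic, withDensity_apply _ measurableSet_Iic,
    lintegral_Iic_truncGumbelPDF]
  exact hcdf x

theorem measure_lt_eq_truncGumbelCDF {Ω : Type*} [MeasurableSpace Ω] {μ : Measure Ω}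
    [IsProbabilityMeasure μ] {X : Ω → ℝ} (hX : Measurable X)
    (hcdf : ∀ x, μ {ω | X ω ≤ x} = ENNReal.ofReal (truncGumbelCDF M x)) (x : ℝ) :
    μ {ω | X ω < x} = ENNReal.ofReal (truncGumbelCDF M x) := by
  rw [← lintegral_Iic_truncGumbelPDF, ← setLIntegral_congr Iio_ae_eq_Iic,
    ← withDensity_apply _ measurableSet_Iio, ← map_eq_withDensity_truncGumbelPDF hX hcdf,
    Measure.map_apply hX measurableSet_Iio]
  rfl

theorem truncGumbelCDF_add_log_sub_log {x a b : ℝ} (ha : 0 < a) (hb : 0 < b)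
    (hx : x + (log b - log a) ≤ M) :
    truncGumbelCDF M (x + (log b - log a)) = exp (exp (-M) - a / b * exp (-x)) := by
  rw [truncGumbelCDF_of_le hx, neg_add, exp_add, neg_sub, exp_sub (log a), exp_log ha, exp_log hb,
    mul_comm]

end TruncGumbel

theorem measure_forall_lt_add_eq_lintegral {Ω ι : Type*} [MeasurableSpace Ω] {μ : Measure Ω}
    [IsProbabilityMeasure μ] {g : ι → Ω → ℝ} (hmeas : ∀ i, Measurable (g i))
    (hindep : iIndepFun g μ) {T : Finset ι} {n : ι} (hnT : n ∉ T) (c : ι → ℝ) :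
    μ {ω | ∀ i ∈ T, g i ω < g n ω + c i} =
      ∫⁻ x, ∏ i ∈ T, μ {ω | g i ω < x + c i} ∂(μ.map (g n)) := by
  classical
  set Y : Ω → T → ℝ := fun ω i => g i ω
  have hY : Measurable Y := measurable_pi_lambda _ fun i => hmeas i
  set E : Set (ℝ × (T → ℝ)) := ⋂ i : T, {q | q.2 i < q.1 + c i}
  have hE : MeasurableSet E :=
    MeasurableSet.iInter fun i => measurableSet_lt (by fun_prop) (by fun_prop)
  have hindep_nY : IndepFun (g n) Y μ :=
    (hindep.indepFun_finset {n} T (Finset.disjoint_singleton_left.2 hnT) hmeas).comp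
      (measurable_pi_apply (⟨n, Finset.mem_singleton_self n⟩ : ({n} : Finset ι)))
      measurable_id
  have hsection : ∀ x, μ.map Y (Prod.mk x ⁻¹' E) = ∏ i ∈ T, μ {ω | g i ω < x + c i} := by
    intro x
    rw [Measure.map_apply hY (measurableSet_preimage measurable_prodMk_left hE)]
    have : Y ⁻¹' (Prod.mk x ⁻¹' E) = ⋂ i ∈ T, g i ⁻¹' Iio (x + c i) := by
      ext ω; simp [E, Y]
    rw [this, hindep.measure_inter_preimage_eq_mul T fun i _ => measurableSet_Iio]
    rfl
  have hevent : {ω | ∀ i ∈ T, g i ω < g n ω + c i} = (fun ω => (g n ω, Y ω)) ⁻¹' E := by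
    ext ω; simp [E, Y]
  rw [hevent, ← Measure.map_apply ((hmeas n).prodMk hY) hE,
    (indepFun_iff_map_prod_eq_prod_map_map (hmeas n).aemeasurable hY.aemeasurable).1 hindep_nY,
    Measure.prod_apply hE]
  exact lintegral_congr hsection

theorem measure_forall_lt_add_eq_integral_truncGumbel {Ω ι : Type*} [MeasurableSpace Ω]
    {μ : Measure Ω} [IsProbabilityMeasure μ] {M : ℝ} {g : ι → Ω → ℝ}
    (hmeas : ∀ i, Measurable (g i)) (hindep : iIndepFun g μ)
    (hcdf : ∀ i x, μ {ω | g i ω ≤ x} = ENNReal.ofReal (truncGumbelCDF M x))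
    {T : Finset ι} {n : ι} (hnT : n ∉ T) (c : ι → ℝ) :
    μ {ω | ∀ i ∈ T, g i ω < g n ω + c i} =
      ENNReal.ofReal (∫ x, truncGumbelPDF M x * ∏ i ∈ T, truncGumbelCDF M (x + c i)) := by
  simp_rw [measure_forall_lt_add_eq_lintegral hmeas hindep hnT,
    measure_lt_eq_truncGumbelCDF (hmeas _) (hcdf _)]
  rw [map_eq_withDensity_truncGumbelPDF (hmeas n) (hcdf n),
    lintegral_withDensity_eq_lintegral_mul _ (measurable_truncGumbelPDF M).ennreal_ofReal
      (by fun_prop),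
    ofReal_integral_eq_lintegral_ofReal (integrable_truncGumbelPDF_mul_prod M T c)
      (ae_of_all _ fun x => mul_nonneg (truncGumbelPDF_nonneg M x)
        (Finset.prod_nonneg fun _ _ => truncGumbelCDF_nonneg M _))]
  refine lintegral_congr fun x => ?_
  rw [ENNReal.ofReal_mul (truncGumbelPDF_nonneg M x),
    ENNReal.ofReal_prod_of_nonneg fun _ _ => truncGumbelCDF_nonneg M _]
  rfl

noncomputable def breakpoint (M : ℝ) (p : ℕ → ℝ) (n j : ℕ) : ℝ := M + (log (p j) - log (p n))

noncomputable def argmaxIntegrand (K n : ℕ) (M : ℝ) (p : ℕ → ℝ) (x : ℝ) : ℝ :=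
  truncGumbelPDF M x *
    ∏ i ∈ (Finset.Icc 1 K).erase n, truncGumbelCDF M (x + (log (p n) - log (p i)))

/-- The paper's `β(i)`; the `if` gives the value `0` that the paper's convention `p 0 = 0`
assigns to the second term for `i = 1`. -/
noncomputable def truncGumbelBeta (K : ℕ) (M : ℝ) (p : ℕ → ℝ) (i : ℕ) : ℝ :=
  (exp ((((K : ℝ) + 1 - i) - (∑ k ∈ Finset.Icc i K, p k) / p i) * exp (-M)) -
    (if i = 1 then 0 else
      exp ((((K : ℝ) + 1 - i) - (∑ k ∈ Finset.Icc i K, p k) / p (i - 1)) * exp (-M)))) /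
  (∑ k ∈ Finset.Icc i K, p k)

section ArgmaxIntegral

variable {K n : ℕ} {M : ℝ} {p : ℕ → ℝ}

theorem exp_neg_breakpoint {i : ℕ} (hpn : 0 < p n) (hpi : 0 < p i) :
    exp (-breakpoint M p n i) = exp (-M) * (p n / p i) := by
  rw [breakpoint, neg_add, exp_add, neg_sub, exp_sub, exp_log hpn, exp_log hpi]

theorem breakpoint_self : breakpoint M p n n = M := by
  simp [breakpoint]

theorem sum_Icc_pos (hpos : ∀ i ∈ Finset.Icc 1 K, 0 < p i) {j : ℕ} (hj : 1 ≤ j) (hjK : j ≤ K) :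
    0 < ∑ k ∈ Finset.Icc j K, p k :=
  Finset.sum_pos (fun k hk => hpos k (Finset.mem_Icc.2 ⟨hj.trans (Finset.mem_Icc.1 hk).1,
    (Finset.mem_Icc.1 hk).2⟩)) ⟨K, Finset.mem_Icc.2 ⟨hjK, le_rfl⟩⟩

/-- The piece antiderivative, evaluated at the breakpoint `tᵢ`. -/
theorem exp_mul_exp_neg_breakpoint_div {i : ℕ} (c S : ℝ) (hS : S ≠ 0) (hpn : 0 < p n)
    (hpi : 0 < p i) :
    exp (c * exp (-M)) * (exp (-(S / p n * exp (-breakpoint M p n i))) / (S / p n)) =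
      p n * exp ((c - S / p i) * exp (-M)) / S := by
  have : S / p n * (exp (-M) * (p n / p i)) = S / p i * exp (-M) := by
    field_simp
  rw [exp_neg_breakpoint hpn hpi, this, sub_mul, sub_eq_add_neg, exp_add]
  field_simp

theorem integrable_argmaxIntegrand : Integrable (argmaxIntegrand K n M p) :=
  integrable_truncGumbelPDF_mul_prod M _ _

variable (hpos : ∀ i ∈ Finset.Icc 1 K, 0 < p i)
  (hmono : ∀ i j, 1 ≤ i → i ≤ j → j ≤ K → p i ≤ p j)
include hpos hmono

theorem breakpoint_mono {a b : ℕ} (ha : 1 ≤ a) (hab : a ≤ b) (hb : b ≤ K) :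
    breakpoint M p n a ≤ breakpoint M p n b := by
  have := log_le_log (hpos a (Finset.mem_Icc.2 ⟨ha, hab.trans hb⟩)) (hmono a b ha hab hb)
  unfold breakpoint
  linarith

variable (hn : n ∈ Finset.Icc 1 K)
include hn

theorem argmaxIntegrand_eq_of_mem_piece {j : ℕ}
    (hj : 1 ≤ j) (hjn : j ≤ n) {x : ℝ} (hlow : ∀ i ∈ Finset.Ico 1 j, breakpoint M p n i ≤ x)
    (hup : x < breakpoint M p n j) :
    argmaxIntegrand K n M p x = exp (((K : ℝ) + 1 - j) * exp (-M)) *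
      (exp (-x) * exp (-((∑ k ∈ Finset.Icc j K, p k) / p n * exp (-x)))) := by
  obtain ⟨hn1, hnK⟩ := Finset.mem_Icc.1 hn
  have hpn := hpos n hn
  have hxM : x ≤ M := by
    have := breakpoint_mono (M := M) (n := n) hpos hmono hj hjn hnK
    rw [breakpoint_self] at this
    linarith
  have hsplit : (Finset.Icc 1 K).erase n = Finset.Ico 1 j ∪ (Finset.Icc j K).erase n := by
    ext i; simp only [Finset.mem_erase, Finset.mem_Icc, Finset.mem_Ico, Finset.mem_union]; omega
  have hdisj : Disjoint (Finset.Ico 1 j) ((Finset.Icc j K).erase n) := by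
    simp only [Finset.disjoint_left, Finset.mem_erase, Finset.mem_Icc, Finset.mem_Ico]; omega
  have hlowprod : ∏ i ∈ Finset.Ico 1 j, truncGumbelCDF M (x + (log (p n) - log (p i))) = 1 :=
    Finset.prod_eq_one fun i hi => truncGumbelCDF_of_ge <| by
      have := hlow i hi
      unfold breakpoint at this
      linarith
  have hhighprod : ∏ i ∈ (Finset.Icc j K).erase n, truncGumbelCDF M (x + (log (p n) - log (p i))) =
      exp (((K : ℝ) - j) * exp (-M) - (∑ k ∈ Finset.Icc j K, p k - p n) / p n * exp (-x)) := by
    have hcdf : ∀ i ∈ (Finset.Icc j K).erase n, truncGumbelCDF M (x + (log (p n) - log (p i))) =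
        exp (exp (-M) - p i / p n * exp (-x)) := by
      intro i hi
      obtain ⟨hji, hiK⟩ := Finset.mem_Icc.1 (Finset.mem_of_mem_erase hi)
      have := breakpoint_mono (M := M) (n := n) hpos hmono hj hji hiK
      unfold breakpoint at this hup
      exact truncGumbelCDF_add_log_sub_log (hpos i (Finset.mem_Icc.2 ⟨hj.trans hji, hiK⟩)) hpn
        (by linarith)
    have hnmem : n ∈ Finset.Icc j K := Finset.mem_Icc.2 ⟨hjn, hnK⟩
    rw [Finset.prod_congr rfl hcdf, ← exp_sum, Finset.sum_sub_distrib, Finset.sum_const,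
      Finset.card_erase_of_mem hnmem, Nat.card_Icc, ← Finset.sum_mul, ← Finset.sum_div,
      Finset.sum_erase_eq_sub hnmem, nsmul_eq_mul]
    congr 3
    push_cast [Nat.sub_sub, show j ≤ K from hjn.trans hnK]
    ring
  rw [argmaxIntegrand, hsplit, Finset.prod_union hdisj, hlowprod, hhighprod, one_mul,
    truncGumbelPDF, indicator_of_mem (mem_Iic.2 hxM)]
  have hexp : exp (exp (-M)) * exp (-exp (-x)) *
      exp (((K : ℝ) - j) * exp (-M) - (∑ k ∈ Finset.Icc j K, p k - p n) / p n * exp (-x)) =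
      exp (((K : ℝ) + 1 - j) * exp (-M)) *
        exp (-((∑ k ∈ Finset.Icc j K, p k) / p n * exp (-x))) := by
    rw [← exp_add, ← exp_add, ← exp_add]
    congr 1
    field_simp
    ring
  linear_combination exp (-x) * hexp


theorem integral_Iic_breakpoint_one_argmaxIntegrand :
    ∫ x in Iic (breakpoint M p n 1), argmaxIntegrand K n M p x = p n * truncGumbelBeta K M p 1 := by
  obtain ⟨hn1, hnK⟩ := Finset.mem_Icc.1 hn
  have hpn := hpos n hn
  have hS := sum_Icc_pos hpos le_rfl (hn1.trans hnK)
  rw [← setIntegral_congr_set Iio_ae_eq_Iic,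
    setIntegral_congr_fun measurableSet_Iio fun x hx =>
      argmaxIntegrand_eq_of_mem_piece hpos hmono hn le_rfl hn1 (by simp) hx,
    setIntegral_congr_set Iio_ae_eq_Iic, integral_const_mul,
    integral_Iic_exp_neg_mul_exp_neg_mul_exp_neg (div_pos hS hpn),
    exp_mul_exp_neg_breakpoint_div _ _ hS.ne' hpn
      (hpos 1 (Finset.mem_Icc.2 ⟨le_rfl, hn1.trans hnK⟩)),
    truncGumbelBeta, if_pos rfl, sub_zero]
  push_cast
  ring

theorem integral_Ioc_breakpoint_argmaxIntegrand {m : ℕ} (hm : 1 ≤ m) (hmn : m + 1 ≤ n) :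
    ∫ x in Ioc (breakpoint M p n m) (breakpoint M p n (m + 1)), argmaxIntegrand K n M p x =
      p n * truncGumbelBeta K M p (m + 1) := by
  obtain ⟨hn1, hnK⟩ := Finset.mem_Icc.1 hn
  have hpn := hpos n hn
  have hS := sum_Icc_pos hpos (Nat.le_add_left 1 m) (hmn.trans hnK)
  have hle := breakpoint_mono (M := M) (n := n) hpos hmono hm m.le_succ (hmn.trans hnK)
  rw [← setIntegral_congr_set Ioo_ae_eq_Ioc,
    setIntegral_congr_fun measurableSet_Ioo fun x hx =>
      argmaxIntegrand_eq_of_mem_piece hpos hmono hn (Nat.le_add_left 1 m) hmn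
        (fun i hi => (breakpoint_mono hpos hmono (Finset.mem_Ico.1 hi).1
          (Nat.lt_succ_iff.1 (Finset.mem_Ico.1 hi).2) (by omega)).trans hx.1.le) hx.2,
    setIntegral_congr_set Ioo_ae_eq_Ioc, ← intervalIntegral.integral_of_le hle,
    intervalIntegral.integral_const_mul,
    integral_exp_neg_mul_exp_neg_mul_exp_neg (div_pos hS hpn).ne', mul_sub,
    exp_mul_exp_neg_breakpoint_div _ _ hS.ne' hpn (hpos _ (Finset.mem_Icc.2 ⟨by omega, by omega⟩)),
    exp_mul_exp_neg_breakpoint_div _ _ hS.ne' hpn (hpos _ (Finset.mem_Icc.2 ⟨hm, by omega⟩)),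
    truncGumbelBeta, if_neg (by omega), Nat.add_sub_cancel]
  ring

theorem integral_Iic_breakpoint_argmaxIntegrand {m : ℕ} (hm : 1 ≤ m) (hmn : m ≤ n) :
    ∫ x in Iic (breakpoint M p n m), argmaxIntegrand K n M p x =
      p n * ∑ i ∈ Finset.Icc 1 m, truncGumbelBeta K M p i := by
  induction m, hm using Nat.le_induction with
  | base => rw [integral_Iic_breakpoint_one_argmaxIntegrand hpos hmono hn, Finset.Icc_self,
      Finset.sum_singleton]
  | succ m hm ih =>
    have hle := breakpoint_mono (M := M) (n := n) hpos hmono hm m.le_succ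
      (hmn.trans (Finset.mem_Icc.1 hn).2)
    rw [← Iic_union_Ioc_eq_Iic hle, setIntegral_union (Iic_disjoint_Ioc le_rfl) measurableSet_Ioc
        integrable_argmaxIntegrand.integrableOn integrable_argmaxIntegrand.integrableOn,
      ih (by omega), integral_Ioc_breakpoint_argmaxIntegrand hpos hmono hn hm hmn,
      Finset.sum_Icc_succ_top (by omega), mul_add]

theorem integral_argmaxIntegrand :
    ∫ x, argmaxIntegrand K n M p x = p n * ∑ i ∈ Finset.Icc 1 n, truncGumbelBeta K M p i := by
  have hvanish : ∀ x ∈ Ioi M, argmaxIntegrand K n M p x = 0 := fun x hx => by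
    rw [argmaxIntegrand, truncGumbelPDF, indicator_of_notMem (notMem_Iic.2 hx), zero_mul]
  have hIic := integral_Iic_breakpoint_argmaxIntegrand (M := M) hpos hmono hn
    (Finset.mem_Icc.1 hn).1 le_rfl
  rw [breakpoint_self] at hIic
  rw [← intervalIntegral.integral_Iic_add_Ioi integrable_argmaxIntegrand.integrableOn
      integrable_argmaxIntegrand.integrableOn, setIntegral_eq_zero_of_forall_eq_zero hvanish,
    add_zero, hIic]

end ArgmaxIntegral

theorem stmt_12_general {Ω : Type*} [MeasurableSpace Ω] (μ : Measure Ω) [IsProbabilityMeasure μ]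
    (K : ℕ) (M : ℝ) (p : ℕ → ℝ)
    (hpos : ∀ i ∈ Finset.Icc 1 K, 0 < p i)
    (hmono : ∀ i j, 1 ≤ i → i ≤ j → j ≤ K → p i ≤ p j)
    (g : ℕ → Ω → ℝ) (hmeas : ∀ i, Measurable (g i))
    (hindep : iIndepFun g μ)
    (htrunc : ∀ i, ∀ x : ℝ,
      μ {ω | g i ω ≤ x} =
        ENNReal.ofReal (min (exp (-exp (-x)) / exp (-exp (-M))) 1))
    (n : ℕ) (hn : n ∈ Finset.Icc 1 K) :
    μ {ω | ∀ i ∈ Finset.Icc 1 K, i ≠ n → log (p i) + g i ω < log (p n) + g n ω} =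
      ENNReal.ofReal (p n * ∑ i ∈ Finset.Icc 1 n,
        (exp ((((K : ℝ) + 1 - i) - (∑ k ∈ Finset.Icc i K, p k) / p i) * exp (-M)) -
          (if i = 1 then 0 else
            exp ((((K : ℝ) + 1 - i) - (∑ k ∈ Finset.Icc i K, p k) / p (i - 1)) * exp (-M)))) /
        (∑ k ∈ Finset.Icc i K, p k)) := by
  have hevent : {ω | ∀ i ∈ Finset.Icc 1 K, i ≠ n → log (p i) + g i ω < log (p n) + g n ω} =
      {ω | ∀ i ∈ (Finset.Icc 1 K).erase n, g i ω < g n ω + (log (p n) - log (p i))} := by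
    ext ω
    simp only [mem_ofPred_eq, Finset.mem_erase]
    exact forall_congr' fun i => ⟨fun h hi => by linarith [h hi.2 hi.1],
      fun h hi hne => by linarith [h ⟨hne, hi⟩]⟩
  rw [hevent, measure_forall_lt_add_eq_integral_truncGumbel hmeas hindep htrunc
    (Finset.notMem_erase n _)]
  exact congrArg ENNReal.ofReal (integral_argmaxIntegrand hpos hmono hn)

/-- Closed-form class probabilities for categorical sampling with truncated Gumbel noise.
The classes `1,…,K` have probabilities `0 < p 1 ≤ … ≤ p K` summing to `1` (with the
convention `p 0 = 0`, so the `i = 1` term `e^{(⋯ - S/p 0)e^{-M}}` is `0`), and the noise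
variables are i.i.d. standard Gumbel conditioned on `g ≤ M`. -/
theorem stmt_12 {Ω : Type*} [MeasurableSpace Ω] (μ : Measure Ω) [IsProbabilityMeasure μ]
    (K : ℕ) (hK : 1 ≤ K) (M : ℝ) (p : ℕ → ℝ)
    (hp0 : p 0 = 0)
    (hpos : ∀ i ∈ Finset.Icc 1 K, 0 < p i)
    (hmono : ∀ i j, 1 ≤ i → i ≤ j → j ≤ K → p i ≤ p j)
    (hsum : ∑ i ∈ Finset.Icc 1 K, p i = 1)
    (g : ℕ → Ω → ℝ) (hmeas : ∀ i, Measurable (g i))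
    (hindep : iIndepFun g μ)
    (htrunc : ∀ i, ∀ x : ℝ,
      μ {ω | g i ω ≤ x} =
        ENNReal.ofReal (min (exp (-exp (-x)) / exp (-exp (-M))) 1))
    (n : ℕ) (hn : n ∈ Finset.Icc 1 K) :
    μ {ω | ∀ i ∈ Finset.Icc 1 K, i ≠ n → log (p i) + g i ω < log (p n) + g n ω} =
      ENNReal.ofReal (p n * ∑ i ∈ Finset.Icc 1 n,
        (exp ((((K : ℝ) + 1 - i) - (∑ k ∈ Finset.Icc i K, p k) / p i) * exp (-M)) -
          (if i = 1 then 0 else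
            exp ((((K : ℝ) + 1 - i) - (∑ k ∈ Finset.Icc i K, p k) / p (i - 1)) * exp (-M)))) /
        (∑ k ∈ Finset.Icc i K, p k)) :=
  stmt_12_general μ K M p hpos hmono g hmeas hindep htrunc n hn
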